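/- arXiv:2509.24541 — 3 statements merged into one kernel-verified Lean document; each statement's English description precedes it below -/
import Mathlib

section
/- Let ε > 0 and let L : [0,∞) → ℝ be a nonnegative locally Lipschitz function such that for all 0 ≤ s ≤ t, L(t) − L(s) ≤ −ε ∫_s^t √(2·L(u)) du. Then L is nonincreasing, for every t ≥ 0 one has L(t) ≤ (max(√(L(0)) − ε·t/√2, 0))², and in particular L(t) = 0 for all t ≥ √(2·L(0))/ε. -/
/-!
With `g = √L`, monotonicity of `L` bounds the drift integral below by its endpoint value, so
`g s ^ 2 - g t ^ 2 ≥ ε √2 (t - s) g t` for `s ≤ t`. Dividing by `g s + g t → 2 g t` shows that,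
wherever `g > 0`, the lower right Dini derivative of `g` is at most `-ε / √2`; comparison with the
line `√(L 0) - ε t / √2` then bounds `g` as long as `L` stays positive.
-/

open Set Filter Topology

section SqrtComparison

variable {g : ℝ → ℝ} {k : ℝ}

theorem slope_le_of_sq_sub_sq_ge {x z : ℝ} (hxz : x < z) (hx : 0 < g x) (hz : 0 ≤ g z)
    (h : k * (z - x) * g z ≤ g x ^ 2 - g z ^ 2) :
    slope g x z ≤ -(k * g z / (g x + g z)) := by
  have hden : 0 < (z - x) * (g x + g z) := mul_pos (sub_pos.2 hxz) (by positivity)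
  have hdiff : -(k * g z / (g x + g z)) - slope g x z =
      (g x ^ 2 - g z ^ 2 - k * (z - x) * g z) / ((z - x) * (g x + g z)) := by
    have hzx : z - x ≠ 0 := (sub_pos.2 hxz).ne'
    rw [slope_def_field]
    field_simp
    ring
  linarith [div_nonneg (sub_nonneg.2 h) hden.le]

theorem le_sub_mul_of_sq_sub_sq_ge {a b : ℝ} (hg : ContinuousOn g (Icc a b))
    (hpos : ∀ x ∈ Icc a b, 0 < g x)
    (h : ∀ x z, a ≤ x → x < z → z ≤ b → k * (z - x) * g z ≤ g x ^ 2 - g z ^ 2) :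
    ∀ x ∈ Icc a b, g x ≤ g a - k / 2 * (x - a) := by
  refine image_le_of_liminf_slope_right_le_deriv_boundary (B' := fun _ ↦ -(k / 2)) hg
    (by simp) (by fun_prop) (fun x _ ↦ ?_) (fun x hx r hr ↦ ?_)
  · simpa using (((hasDerivAt_id x).sub_const a).const_mul (k / 2)).const_sub (g a)
      |>.hasDerivWithinAt (s := Ici x)
  have hgx := hpos x (Ico_subset_Icc_self hx)
  have hcont : Tendsto g (𝓝[>] x) (𝓝 (g x)) :=
    (hg x (Ico_subset_Icc_self hx)).mono_of_mem_nhdsWithin (Icc_mem_nhdsGT_of_mem hx)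
  have hlim : Tendsto (fun z ↦ -(k * g z / (g x + g z))) (𝓝[>] x) (𝓝 (-(k / 2))) := by
    have hden : Tendsto (fun z ↦ g x + g z) (𝓝[>] x) (𝓝 (g x + g x)) :=
      tendsto_const_nhds.add hcont
    have hval : -(k * g x / (g x + g x)) = -(k / 2) := by
      field_simp
      ring
    exact hval ▸ ((hcont.const_mul k).div hden (by positivity)).neg
  refine ((hlim.eventually (Iio_mem_nhds hr)).and (Ioo_mem_nhdsGT hx.2)).mono ?_ |>.frequently
  rintro z ⟨hzr, hxz, hzb⟩
  exact (slope_le_of_sq_sub_sq_ge hxz hgx (hpos z ⟨hx.1.trans hxz.le, hzb.le⟩).le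
    (h x z hx.1 hxz hzb.le)).trans_lt hzr

end SqrtComparison

section SqrtDrift

variable {L : ℝ → ℝ} {ε : ℝ}

theorem antitoneOn_of_sqrt_drift (hε : 0 ≤ ε)
    (hdrift : ∀ s t : ℝ, 0 ≤ s → s ≤ t → L t - L s ≤ -ε * ∫ u in s..t, √(2 * L u)) :
    AntitoneOn L (Ici 0) := fun s hs t _ hst ↦ by
  have hint : 0 ≤ ∫ u in s..t, √(2 * L u) :=
    intervalIntegral.integral_nonneg hst fun _ _ ↦ Real.sqrt_nonneg _
  nlinarith [hdrift s t hs hst]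

theorem mul_sqrt_le_sub_of_sqrt_drift (hε : 0 ≤ ε)
    (hdrift : ∀ s t : ℝ, 0 ≤ s → s ≤ t → L t - L s ≤ -ε * ∫ u in s..t, √(2 * L u))
    {s t : ℝ} (hs : 0 ≤ s) (hst : s ≤ t) :
    ε * (t - s) * √(2 * L t) ≤ L s - L t := by
  have hanti := antitoneOn_of_sqrt_drift hε hdrift
  have hsub : uIcc s t ⊆ Ici 0 := by
    rw [uIcc_of_le hst]
    exact fun u hu ↦ hs.trans hu.1
  have hint : (t - s) * √(2 * L t) ≤ ∫ u in s..t, √(2 * L u) := by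
    have hanti' : AntitoneOn (fun u ↦ √(2 * L u)) (uIcc s t) := fun u hu v hv huv ↦
      Real.sqrt_le_sqrt (by linarith [hanti (hsub hu) (hsub hv) huv])
    have hmono : ∫ _ in s..t, √(2 * L t) ≤ ∫ u in s..t, √(2 * L u) :=
      intervalIntegral.integral_mono_on hst intervalIntegrable_const hanti'.intervalIntegrable
        fun u hu ↦ hanti' (Icc_subset_uIcc hu) right_mem_uIcc hu.2
    rwa [intervalIntegral.integral_const, smul_eq_mul] at hmono
  nlinarith [hdrift s t hs hst, mul_le_mul_of_nonneg_left hint hε]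

theorem sqrt_le_sub_of_sqrt_drift (hε : 0 ≤ ε) (hL0 : ∀ t, 0 ≤ t → 0 ≤ L t)
    (hdrift : ∀ s t : ℝ, 0 ≤ s → s ≤ t → L t - L s ≤ -ε * ∫ u in s..t, √(2 * L u))
    {t : ℝ} (ht : 0 ≤ t) (hcont : ContinuousOn L (Icc 0 t)) (hLt : 0 < L t) :
    √(L t) ≤ √(L 0) - ε * t / √2 := by
  have hanti := antitoneOn_of_sqrt_drift hε hdrift
  have hpos : ∀ x ∈ Icc 0 t, 0 < √(L x) := fun x hx ↦
    Real.sqrt_pos.2 (hLt.trans_le (hanti hx.1 ht hx.2))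
  have hstep : ∀ x z, 0 ≤ x → x < z → z ≤ t →
      ε * √2 * (z - x) * √(L z) ≤ √(L x) ^ 2 - √(L z) ^ 2 := fun x z hx hxz _ ↦ by
    have h := mul_sqrt_le_sub_of_sqrt_drift hε hdrift hx hxz.le
    rw [Real.sqrt_mul zero_le_two] at h
    rw [Real.sq_sqrt (hL0 x hx), Real.sq_sqrt (hL0 z (hx.trans hxz.le))]
    linarith
  have h := le_sub_mul_of_sq_sub_sq_ge hcont.sqrt hpos hstep t ⟨ht, le_rfl⟩
  have hk : ε * √2 / 2 * (t - 0) = ε * t / √2 := by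
    rw [sub_zero]
    field_simp
    rw [Real.sq_sqrt zero_le_two]
  linarith

end SqrtDrift

/-- Lyapunov differential-inequality lemma: if `L : [0,∞) → ℝ` is nonnegative, locally
Lipschitz (i.e. Lipschitz on every compact `[0,A]`), and satisfies the integrated drift bound
`L t - L s ≤ -ε ∫ₛᵗ √(2 L u) du`, then `L` is nonincreasing on `[0,∞)`,
`L t ≤ (max (√(L 0) - ε t / √2) 0)²` for all `t ≥ 0`, and `L t = 0` for all
`t ≥ √(2 L 0) / ε`. -/
theorem lyapunov_sqrt_drift_hits_zero (ε : ℝ) (hε : 0 < ε) (L : ℝ → ℝ)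
    (hL0 : ∀ t, 0 ≤ t → 0 ≤ L t)
    (hlip : ∀ A : ℝ, 0 ≤ A → ∃ K : NNReal, LipschitzOnWith K L (Set.Icc 0 A))
    (hdrift : ∀ s t : ℝ, 0 ≤ s → s ≤ t →
      L t - L s ≤ -ε * ∫ u in s..t, Real.sqrt (2 * L u)) :
    AntitoneOn L (Set.Ici (0 : ℝ)) ∧
    (∀ t : ℝ, 0 ≤ t →
      L t ≤ (max (Real.sqrt (L 0) - ε * t / Real.sqrt 2) 0) ^ 2) ∧
    (∀ t : ℝ, Real.sqrt (2 * L 0) / ε ≤ t → L t = 0) := by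
  have hbound : ∀ t : ℝ, 0 ≤ t → L t ≤ (max (√(L 0) - ε * t / √2) 0) ^ 2 := by
    intro t ht
    rcases (hL0 t ht).eq_or_lt with hLt | hLt
    · rw [← hLt]
      positivity
    obtain ⟨K, hK⟩ := hlip t ht
    have h := sqrt_le_sub_of_sqrt_drift hε.le hL0 hdrift ht hK.continuousOn hLt
    exact (Real.sqrt_le_left (le_max_right _ _)).1 (h.trans (le_max_left _ _))
  refine ⟨antitoneOn_of_sqrt_drift hε.le hdrift, hbound, fun t ht ↦ ?_⟩
  have ht0 : 0 ≤ t := (div_nonneg (Real.sqrt_nonneg _) hε.le).trans ht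
  have hneg : √(L 0) - ε * t / √2 ≤ 0 := by
    rw [div_le_iff₀ hε, Real.sqrt_mul zero_le_two] at ht
    rw [sub_nonpos, le_div_iff₀ (by positivity)]
    linarith
  exact le_antisymm (by simpa [max_eq_right hneg] using hbound t ht0) (hL0 t ht0)
end

section
/- Let Z, Q, A be finite types. Let K : (Z × Q) → A → (Z × Q) → ℝ be nonnegative, and suppose there is P : Z → A → Z → ℝ such that for all z ∈ Z, q ∈ Q, a ∈ A, z' ∈ Z: ∑_{q'∈Q} K(z,q)(a)(z',q') = P(z)(a)(z') (the marginal server-state transition does not depend on the request-queue component). Let p : (Z × Q) → A → ℝ be nonnegative with ∑_{a∈A} p(z,q)(a) = 1 for all (z,q), and let ν : Z × Q → ℝ be nonnegative and stationary for the controlled joint chain, i.e., ν(z,q) = ∑_{z'∈Z} ∑_{q'∈Q} ∑_{a∈A} K(z',q')(a)(z,q) · p(z',q')(a) · ν(z',q') for all (z,q). Define μ(z) = ∑_{q∈Q} ν(z,q) and w(z,a) = ∑_{q∈Q} p(z,q)(a) · ν(z,q). Then for every z ∈ Z, μ(z) = ∑_{z'∈Z} ∑_{a∈A} P(z')(a)(z)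 · w(z',a). Consequently, if μ(z') > 0 for all z' and π(a|z') := w(z',a)/μ(z'), then μ(z) = ∑_{z'∈Z} ∑_{a∈A} P(z')(a)(z) · π(a|z') · μ(z') for all z, i.e., μ is stationary for the server chain under the averaged request-agnostic policy π. -/
/-- In a Markov Decision Processing Network with joint state `(z, q)`, actions `a` chosen with
probability `p (z,q) a`, and joint transition kernel `K` whose `Z`-marginal `P` does not depend
on the queue component, the `Z`-marginal `μ` of any stationary distribution `ν` of the joint
controlled chain is stationary for the server chain under the induced averaged
request-agnostic policy. -/
theorem marginal_stationary_of_joint_stationary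
    {Z Q A : Type*} [Fintype Z] [Fintype Q] [Fintype A]
    (K : Z × Q → A → Z × Q → ℝ) (hK : ∀ zq a zq', 0 ≤ K zq a zq')
    (P : Z → A → Z → ℝ)
    (hP : ∀ z q a z', ∑ q' : Q, K (z, q) a (z', q') = P z a z')
    (p : Z × Q → A → ℝ) (hp : ∀ zq a, 0 ≤ p zq a) (hp1 : ∀ zq, ∑ a : A, p zq a = 1)
    (ν : Z × Q → ℝ) (hν : ∀ zq, 0 ≤ ν zq)
    (hstat : ∀ z q, ν (z, q) =
      ∑ z' : Z, ∑ q' : Q, ∑ a : A, K (z', q') a (z, q) * p (z', q') a * ν (z', q'))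
    (μ : Z → ℝ) (hμ : ∀ z, μ z = ∑ q : Q, ν (z, q))
    (w : Z → A → ℝ) (hw : ∀ z a, w z a = ∑ q : Q, p (z, q) a * ν (z, q)) :
    (∀ z, μ z = ∑ z' : Z, ∑ a : A, P z' a z * w z' a) ∧
    ((∀ z', 0 < μ z') →
      ∀ z, μ z = ∑ z' : Z, ∑ a : A, P z' a z * (w z' a / μ z') * μ z') := by
  have main : ∀ z, μ z = ∑ z' : Z, ∑ a : A, P z' a z * w z' a := by
    intro z
    rw [hμ]
    have h1 : ∑ q : Q, ν (z, q)
        = ∑ q : Q, ∑ z' : Z, ∑ q' : Q, ∑ a : A,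
            K (z', q') a (z, q) * p (z', q') a * ν (z', q') :=
      Finset.sum_congr rfl fun q _ => hstat z q
    rw [h1, Finset.sum_comm]
    refine Finset.sum_congr rfl fun z' _ => ?_
    rw [Finset.sum_comm]
    calc ∑ q' : Q, ∑ q : Q, ∑ a : A, K (z', q') a (z, q) * p (z', q') a * ν (z', q')
        = ∑ q' : Q, ∑ a : A, ∑ q : Q, K (z', q') a (z, q) * p (z', q') a * ν (z', q') := by
          exact Finset.sum_congr rfl fun q' _ => Finset.sum_comm
      _ = ∑ q' : Q, ∑ a : A, P z' a z * (p (z', q') a * ν (z', q')) := by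
          refine Finset.sum_congr rfl fun q' _ => Finset.sum_congr rfl fun a _ => ?_
          rw [← hP z' q' a z, Finset.sum_mul]
          exact Finset.sum_congr rfl fun q _ => by ring
      _ = ∑ a : A, ∑ q' : Q, P z' a z * (p (z', q') a * ν (z', q')) := Finset.sum_comm
      _ = ∑ a : A, P z' a z * w z' a := by
          refine Finset.sum_congr rfl fun a _ => ?_
          rw [hw, Finset.mul_sum]
  refine ⟨main, fun hpos z => ?_⟩
  rw [main z]
  refine Finset.sum_congr rfl fun z' _ => Finset.sum_congr rfl fun a _ => ?_
  rw [mul_assoc, div_mul_cancel₀ _ (hpos z').ne']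
end

section
/- Let λ₁, λ₂, λ₃ ∈ (0,1) satisfy λ₃ > (1−λ₁)(1−λ₂). Let (A₁(n))_{n∈ℕ}, (A₂(n))_{n∈ℕ}, (A₃(n))_{n∈ℕ} be {0,1}-valued random variables, all jointly independent, with P(A_i(n)=1) = λ_i for each i and n. Define Q : ℕ → Ω → ℕ by Q(0) = 0 and Q(n+1) = Q(n) + A₃(n) − S(n), where S(n) = 1 if Q(n) + A₃(n) ≥ 1 and A₁(n) = 0 and A₂(n) = 0, and S(n) = 0 otherwise. Then almost surely Q(n)/n → λ₃ − (1−λ₁)(1−λ₂) > 0 as n → ∞; in particular Q(n) → ∞ almost surely. -/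
/-!
The queue obeys Lindley's recursion `Q (n+1) = max (Q n + Z n) 0` with net input
`Z n = A₃(n) - 1{A₁(n) = A₂(n) = 0}`, hence `Q n = S n - min_{k ≤ n} S k` for the partial
sums `S` of `Z`. The `Z n` are i.i.d. with mean `λ₃ - (1 - λ₁)(1 - λ₂) > 0`, so by the strong
law `S n / n` tends to that mean; in particular `S n → ∞`, the running minimum is bounded,
and `Q n / n` has the same limit.
-/

open MeasureTheory Filter ProbabilityTheory Topology Finset

theorem tendsto_atTop_of_tendsto_div_natCast {u : ℕ → ℝ} {μ : ℝ} (hμ : 0 < μ)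
    (hu : Tendsto (fun n : ℕ => u n / n) atTop (𝓝 μ)) : Tendsto u atTop atTop := by
  refine (hu.pos_mul_atTop hμ tendsto_natCast_atTop_atTop).congr' ?_
  filter_upwards [eventually_ne_atTop 0] with n hn
  exact div_mul_cancel₀ _ (Nat.cast_ne_zero.mpr hn)

section Lindley

variable {z q : ℕ → ℝ}

-- `partialSups (-s) n = -min_{k ≤ n} s k`: this is Lindley's formula `q = s - min s`.
theorem lindley_eq_add_partialSups (hq0 : q 0 = 0)
    (hrec : ∀ n, q (n + 1) = max (q n + z n) 0) (n : ℕ) :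
    q n = ∑ k ∈ range n, z k + partialSups (fun k => -∑ j ∈ range k, z j) n := by
  induction n with
  | zero => simp [hq0]
  | succ n ih =>
    rw [hrec, ih, ← Order.succ_eq_add_one, partialSups_succ, Order.succ_eq_add_one,
      sum_range_succ, ← max_add_add_left]
    congr 1 <;> ring

theorem tendsto_lindley_div_natCast {μ : ℝ} (hμ : 0 < μ) (hq0 : q 0 = 0)
    (hrec : ∀ n, q (n + 1) = max (q n + z n) 0)
    (hz : Tendsto (fun n : ℕ => (∑ k ∈ range n, z k) / n) atTop (𝓝 μ)) :
    Tendsto (fun n : ℕ => q n / n) atTop (𝓝 μ) := by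
  set M := partialSups (fun k => -∑ j ∈ range k, z j)
  have hs : Tendsto (fun n => ∑ k ∈ range n, z k) atTop atTop :=
    tendsto_atTop_of_tendsto_div_natCast hμ hz
  have hbdd : BddAbove (Set.range M) := bddAbove_range_partialSups.mpr
    (tendsto_neg_atTop_atBot.comp hs).isBoundedUnder_le_atBot.bddAbove_range
  have hM : Tendsto (fun n : ℕ => M n / n) atTop (𝓝 0) :=
    (tendsto_atTop_ciSup M.monotone hbdd).div_atTop tendsto_natCast_atTop_atTop
  simpa [lindley_eq_add_partialSups hq0 hrec, add_div] using hz.add hM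

end Lindley

theorem natCast_sub_ite_eq_max (a : ℕ) (c : Prop) [Decidable c] :
    ((a - if 1 ≤ a ∧ c then 1 else 0 : ℕ) : ℝ) =
      max ((a : ℝ) - ((if c then 1 else 0 : ℕ) : ℝ)) 0 := by
  by_cases hc : c
  · rcases Nat.eq_zero_or_pos a with rfl | ha
    · simp [hc]
    · simp [hc, Nat.one_le_iff_ne_zero.mpr ha.ne', Nat.cast_sub ha]
  · simp [hc]

theorem natCast_eq_indicator_of_zero_or_one {Ω : Type*} {Y : Ω → ℕ}
    (hval : ∀ ω, Y ω = 0 ∨ Y ω = 1) : (fun ω => (Y ω : ℝ)) = {ω | Y ω = 1}.indicator 1 := by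
  ext ω; rcases hval ω with h | h <;> simp [h]

section ZeroOne

variable {Ω : Type*} [MeasurableSpace Ω] {P : Measure Ω} [IsProbabilityMeasure P]

theorem measure_eq_zero_of_zero_or_one {Y : Ω → ℕ} (hY : Measurable Y)
    (hval : ∀ ω, Y ω = 0 ∨ Y ω = 1) :
    P {ω | Y ω = 0} = 1 - P {ω | Y ω = 1} := by
  have hcompl : {ω | Y ω = 0} = {ω | Y ω = 1}ᶜ := by
    ext ω; rcases hval ω with h | h <;> simp [h]
  rw [hcompl]
  exact prob_compl_eq_one_sub (hY (measurableSet_singleton 1))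

theorem identDistrib_of_zero_or_one {Ω' : Type*} [MeasurableSpace Ω'] {P' : Measure Ω'}
    [IsProbabilityMeasure P'] {Y : Ω → ℕ} {Y' : Ω' → ℕ} (hY : Measurable Y) (hY' : Measurable Y')
    (hval : ∀ ω, Y ω = 0 ∨ Y ω = 1) (hval' : ∀ ω, Y' ω = 0 ∨ Y' ω = 1)
    (h : P {ω | Y ω = 1} = P' {ω | Y' ω = 1}) : IdentDistrib Y Y' P P' := by
  refine ⟨hY.aemeasurable, hY'.aemeasurable, Measure.ext_of_singleton fun k => ?_⟩
  rw [Measure.map_apply hY (measurableSet_singleton k),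
    Measure.map_apply hY' (measurableSet_singleton k)]
  rcases k with _ | _ | k
  · exact (measure_eq_zero_of_zero_or_one hY hval).trans
      (h ▸ (measure_eq_zero_of_zero_or_one hY' hval').symm)
  · exact h
  · have hY2 : Y ⁻¹' {k + 2} = ∅ := by ext ω; rcases hval ω with h | h <;> simp [h]
    have hY'2 : Y' ⁻¹' {k + 2} = ∅ := by ext ω; rcases hval' ω with h | h <;> simp [h]
    rw [hY2, hY'2, measure_empty, measure_empty]

theorem ae_tendsto_average_of_zero_or_one {Y : ℕ → Ω → ℕ} {p : ℝ} (hp : 0 ≤ p)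
    (hmeas : ∀ n, Measurable (Y n)) (hval : ∀ n ω, Y n ω = 0 ∨ Y n ω = 1)
    (hindep : Pairwise fun m n => IndepFun (Y m) (Y n) P)
    (hprob : ∀ n, P {ω | Y n ω = 1} = ENNReal.ofReal p) :
    ∀ᵐ ω ∂P, Tendsto (fun n : ℕ => (∑ k ∈ range n, (Y k ω : ℝ)) / n) atTop (𝓝 p) := by
  have hset : MeasurableSet {ω | Y 0 ω = 1} := hmeas 0 (measurableSet_singleton 1)
  have hint : Integrable (fun ω => (Y 0 ω : ℝ)) P := by
    rw [natCast_eq_indicator_of_zero_or_one (hval 0)]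
    exact (integrable_const 1).indicator hset
  have hmean : ∫ ω, (Y 0 ω : ℝ) ∂P = p := by
    rw [natCast_eq_indicator_of_zero_or_one (hval 0), integral_indicator_one hset,
      measureReal_def, hprob, ENNReal.toReal_ofReal hp]
  have hslln := strong_law_ae (fun n ω => (Y n ω : ℝ)) hint
    (fun m n hmn => (hindep hmn).comp (measurable_of_countable _) (measurable_of_countable _))
    (fun n => (identDistrib_of_zero_or_one (hmeas n) (hmeas 0) (hval n) (hval 0)
      ((hprob n).trans (hprob 0).symm)).comp (measurable_of_countable _))
  filter_upwards [hslln] with ω hω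
  simpa [hmean, div_eq_inv_mul] using hω

theorem ae_tendsto_average_both_zero {ι : Type*} {A : ι → ℕ → Ω → ℕ} {lam : ι → ℝ}
    (hlam : ∀ k, 0 ≤ lam k ∧ lam k ≤ 1) (hmeas : ∀ k n, Measurable (A k n))
    (hval : ∀ k n ω, A k n ω = 0 ∨ A k n ω = 1)
    (hindep : iIndepFun (fun a : ι × ℕ => A a.1 a.2) P)
    (hprob : ∀ k n, P {ω | A k n ω = 1} = ENNReal.ofReal (lam k)) {i j : ι} (hij : i ≠ j) :
    ∀ᵐ ω ∂P, Tendsto (fun n : ℕ => (∑ k ∈ range n,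
        ((if A i k ω = 0 ∧ A j k ω = 0 then 1 else 0 : ℕ) : ℝ)) / n) atTop
      (𝓝 ((1 - lam i) * (1 - lam j))) := by
  let idle : ℕ × ℕ → ℕ := fun a => if a.1 = 0 ∧ a.2 = 0 then 1 else 0
  have hidle : Measurable idle := measurable_of_countable idle
  have hzero : ∀ k n, P (A k n ⁻¹' {0}) = ENNReal.ofReal (1 - lam k) := fun k n => by
    rw [ENNReal.ofReal_sub _ (hlam k).1, ENNReal.ofReal_one, ← hprob k n]
    exact measure_eq_zero_of_zero_or_one (hmeas k n) (hval k n)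
  refine ae_tendsto_average_of_zero_or_one (Y := fun n ω => idle (A i n ω, A j n ω))
    (mul_nonneg (sub_nonneg.2 (hlam i).2) (sub_nonneg.2 (hlam j).2))
    (fun n => hidle.comp ((hmeas i n).prodMk (hmeas j n)))
    (fun n ω => by by_cases h : A i n ω = 0 ∧ A j n ω = 0 <;> simp [idle, h])
    (fun m n hmn => ?_) (fun n => ?_)
  · have hne : ∀ a b : ι, (a, m) ≠ (b, n) := fun a b h => hmn (Prod.ext_iff.1 h).2
    exact (hindep.indepFun_prodMk_prodMk (fun a => hmeas a.1 a.2) (i, m) (j, m) (i, n) (j, n)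
      (hne _ _) (hne _ _) (hne _ _) (hne _ _)).comp hidle hidle
  · have hset : {ω | idle (A i n ω, A j n ω) = 1} = A i n ⁻¹' {0} ∩ A j n ⁻¹' {0} := by
      ext ω; simp [idle]
    have hindep_ij : IndepFun (A i n) (A j n) P :=
      hindep.indepFun (i := (i, n)) (j := (j, n)) (by simp [hij])
    rw [hset, hindep_ij.measure_inter_preimage_eq_mul _ _ (measurableSet_singleton 0)
      (measurableSet_singleton 0), hzero, hzero, ENNReal.ofReal_mul (sub_nonneg.2 (hlam i).2)]

end ZeroOne

/-- Instability of MaxWeight in the counterexample network: with Bernoulli arrival indicators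
`A i n ∈ {0,1}` of rates `lam i` (all jointly independent), `lam 2 > (1 - lam 0)(1 - lam 1)`,
and the queue recursion `Q (n+1) = Q n + A 2 n - S n` where `S n = 1` exactly when
`Q n + A 2 n ≥ 1` and `A 0 n = 0` and `A 1 n = 0`, the queue is transient: almost surely
`Q n / n → lam 2 - (1 - lam 0)(1 - lam 1) > 0`, and in particular `Q n → ∞`. -/
theorem maxweight_counterexample_queue_transient
    {Ω : Type*} [MeasurableSpace Ω] (P : Measure Ω) [IsProbabilityMeasure P]
    (lam : Fin 3 → ℝ) (hlam : ∀ i, 0 < lam i ∧ lam i < 1)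
    (hunstable : (1 - lam 0) * (1 - lam 1) < lam 2)
    (A : Fin 3 → ℕ → Ω → ℕ)
    (hmeas : ∀ i n, Measurable (A i n))
    (hval : ∀ i n ω, A i n ω = 0 ∨ A i n ω = 1)
    (hindep : iIndepFun (fun p : Fin 3 × ℕ => A p.1 p.2) P)
    (hprob : ∀ i n, P {ω | A i n ω = 1} = ENNReal.ofReal (lam i))
    (Q : ℕ → Ω → ℕ)
    (hQ0 : ∀ ω, Q 0 ω = 0)
    (hQrec : ∀ n ω, Q (n + 1) ω =
      Q n ω + A 2 n ω -
        (if 1 ≤ Q n ω + A 2 n ω ∧ A 0 n ω = 0 ∧ A 1 n ω = 0 then 1 else 0)) :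
    0 < lam 2 - (1 - lam 0) * (1 - lam 1) ∧
    ∀ᵐ ω ∂P,
      Tendsto (fun n : ℕ => (Q n ω : ℝ) / (n : ℝ)) atTop
        (nhds (lam 2 - (1 - lam 0) * (1 - lam 1))) ∧
      Tendsto (fun n : ℕ => Q n ω) atTop atTop := by
  have hpos : 0 < lam 2 - (1 - lam 0) * (1 - lam 1) := sub_pos.2 hunstable
  have harrival := ae_tendsto_average_of_zero_or_one (hlam 2).1.le (hmeas 2) (hval 2)
    (fun m n hmn => hindep.indepFun (i := (2, m)) (j := (2, n)) (by simpa using hmn)) (hprob 2)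
  have hidle := ae_tendsto_average_both_zero (fun k => ⟨(hlam k).1.le, (hlam k).2.le⟩)
    hmeas hval hindep hprob (by decide : (0 : Fin 3) ≠ 1)
  refine ⟨hpos, ?_⟩
  filter_upwards [harrival, hidle] with ω harrival hidle
  have hQ := tendsto_lindley_div_natCast (q := fun n => (Q n ω : ℝ))
    (z := fun n => (A 2 n ω : ℝ) - ((if A 0 n ω = 0 ∧ A 1 n ω = 0 then 1 else 0 : ℕ) : ℝ)) hpos
    (by simp [hQ0])
    (fun n => by rw [hQrec, natCast_sub_ite_eq_max, Nat.cast_add, add_sub_assoc])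
    (by simpa [sum_sub_distrib, sub_div] using harrival.sub hidle)
  exact ⟨hQ, tendsto_natCast_atTop_iff.mp (tendsto_atTop_of_tendsto_div_natCast hpos hQ)⟩
end
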